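/- Let n′ be a linear form on V and let ε, ε′ be multiplication factors related by ε′_{PQ} = e^{n′(P)·n′(Q)} ε_{PQ} for all distinct P,Q ∈ F. Then (O_F, 1, ε) is a composition algebra if and only if (O_F, e^{n′}, ε′) is a composition algebra. -/
import Mathlib


open Finset

/-- The ambient `𝔽₂`-vector space (the Fano cube); the Fano plane `F` is its set of
nonzero vectors. -/
abbrev V : Type := Fin 3 → ZMod 2

/-- A multiplication factor: a sign `ε P Q ∈ {−1,1}` for each ordered pair `(P,Q)` of
distinct points of the Fano plane with `ε Q P = −ε P Q`, normalised to `0` outside its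
domain of definition. -/
def IsMulFactor (ε : V → V → ℤ) : Prop :=
  (∀ P Q : V, P ≠ 0 → Q ≠ 0 → P ≠ Q → (ε P Q = 1 ∨ ε P Q = -1) ∧ ε Q P = -ε P Q) ∧
  (∀ P Q : V, P = 0 ∨ Q = 0 ∨ P = Q → ε P Q = 0)

/-- A norm on the Fano plane: a map to `{−1,1}` multiplicative on pairs of distinct points. -/
def IsNorm (N : V → ℤ) : Prop :=
  (∀ P : V, P ≠ 0 → N P = 1 ∨ N P = -1) ∧
  (∀ P Q : V, P ≠ 0 → Q ≠ 0 → P ≠ Q → N (P + Q) = N P * N Q)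

/-- A line of the Fano plane: a 3-element set `{P,Q,R}` of nonzero vectors with `P+Q+R=0`. -/
def IsLine (L : Set V) : Prop :=
  ∃ P Q R : V, P ≠ 0 ∧ Q ≠ 0 ∧ R ≠ 0 ∧ P ≠ Q ∧ P ≠ R ∧ Q ≠ R ∧
    P + Q + R = 0 ∧ L = {P, Q, R}

/-- A triangle: a 3-element subset of the Fano plane which is not a line. -/
def IsTriangle (T : Set V) : Prop :=
  ∃ P Q R : V, P ≠ 0 ∧ Q ≠ 0 ∧ R ≠ 0 ∧ P ≠ Q ∧ P ≠ R ∧ Q ≠ R ∧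
    P + Q + R ≠ 0 ∧ T = {P, Q, R}

/-- A quadrilateral: a 4-element subset of the Fano plane containing no line. -/
def IsQuad (S : Set V) : Prop :=
  (∃ P Q R T : V, P ≠ 0 ∧ Q ≠ 0 ∧ R ≠ 0 ∧ T ≠ 0 ∧
    P ≠ Q ∧ P ≠ R ∧ P ≠ T ∧ Q ≠ R ∧ Q ≠ T ∧ R ≠ T ∧ S = {P, Q, R, T}) ∧
  (∀ L : Set V, IsLine L → ¬ L ⊆ S)

/-- The future of a point `P`: the points `Q` of the Fano plane with `ε P Q = 1`. -/
def Future (ε : V → V → ℤ) (P : V) : Set V := {Q : V | Q ≠ 0 ∧ Q ≠ P ∧ ε P Q = 1}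

/-- The past of a point `P`: the points `Q` of the Fano plane with `ε P Q = −1`. -/
def Past (ε : V → V → ℤ) (P : V) : Set V := {Q : V | Q ≠ 0 ∧ Q ≠ P ∧ ε P Q = -1}

/-- The composition conditions (C1) and (C2) on a multiplication factor. -/
def CompCond (ε : V → V → ℤ) : Prop :=
  (∀ P Q R : V, P ≠ 0 → Q ≠ 0 → R ≠ 0 → P ≠ Q → P ≠ R → Q ≠ R → P + Q + R = 0 →
    ε P Q * ε Q R = 1) ∧
  (∀ P Q R S : V, P ≠ 0 → Q ≠ 0 → R ≠ 0 → S ≠ 0 →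
    P ≠ Q → P ≠ R → P ≠ S → Q ≠ R → Q ≠ S → R ≠ S → IsQuad {P, Q, R, S} →
    ε P Q * ε Q R * ε R S * ε S P = -1)

/-- An oriented triangle `{P,Q,R}`: one with `ε P Q = ε Q R = ε R P`. -/
def OrientedTri (ε : V → V → ℤ) (T : Set V) : Prop :=
  ∃ P Q R : V, T = {P, Q, R} ∧ P ≠ Q ∧ P ≠ R ∧ Q ≠ R ∧
    ε P Q = ε Q R ∧ ε Q R = ε R P

/-- `P` is the distinguished point of the quadrilateral `S`: the point of `S` whose
complement in `S` is the oriented triangle of `S`. -/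
def IsDistPt (ε : V → V → ℤ) (S : Set V) (P : V) : Prop :=
  P ∈ S ∧ IsTriangle (S \ {P}) ∧ OrientedTri ε (S \ {P})

/-- A family of subsets of the Fano plane satisfies the Fano axioms if two distinct points
lie in exactly one member and two distinct members meet in exactly one point. -/
def FanoFamily (Δ : Set (Set V)) : Prop :=
  (∀ P Q : V, P ≠ 0 → Q ≠ 0 → P ≠ Q → ∃! T, T ∈ Δ ∧ P ∈ T ∧ Q ∈ T) ∧
  (∀ T₁ T₂ : Set V, T₁ ∈ Δ → T₂ ∈ Δ → T₁ ≠ T₂ → ∃! X : V, X ∈ T₁ ∩ T₂)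

/-- An `n`-oriented map: `α_P(P) + n(P) = 1` on the Fano plane and
`α_P(Q) + α_Q(P) = 1` for distinct points; normalised by `α 0 = 0`. -/
def IsNOrientedMap (n : V →ₗ[ZMod 2] ZMod 2) (α : V → V →ₗ[ZMod 2] ZMod 2) : Prop :=
  (∀ P : V, P ≠ 0 → α P P + n P = 1) ∧
  (∀ P Q : V, P ≠ 0 → Q ≠ 0 → P ≠ Q → α P Q + α Q P = 1) ∧
  α 0 = 0

/-- An oriented map is a `0`-oriented map. -/
def IsOrientedMap (α : V → V →ₗ[ZMod 2] ZMod 2) : Prop := IsNOrientedMap 0 α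

/-- The exponential `e : ZMod 2 → {−1,1}`, `e^0 = 1`, `e^1 = −1`. -/
def eSign (x : ZMod 2) : ℤ := if x = 0 then 1 else -1

/-- The multiplication factor `e^α` associated to an (`n`-)oriented map `α`. -/
def expMap (α : V → V →ₗ[ZMod 2] ZMod 2) : V → V → ℤ :=
  fun P Q => if P ≠ 0 ∧ Q ≠ 0 ∧ P ≠ Q then eSign (α P Q) else 0

/-- The set `Δ_P = {Q ∈ F : Q ≠ P, α_P(Q) = 1}` associated to an oriented map. -/
def DeltaSet (α : V → V →ₗ[ZMod 2] ZMod 2) (P : V) : Set V :=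
  {Q : V | Q ≠ 0 ∧ Q ≠ P ∧ α P Q = 1}

/-- The map `α ↦ α′`, `α′_P = α_P + n(P)·n`. -/
def nTransform (n : V →ₗ[ZMod 2] ZMod 2) (α : V → V →ₗ[ZMod 2] ZMod 2) :
    V → V →ₗ[ZMod 2] ZMod 2 :=
  fun P => α P + n P • n

/-- The norm `e^{n}` on the Fano plane associated to a linear form `n`. -/
def NormOf (n : V →ₗ[ZMod 2] ZMod 2) : V → ℤ := fun P => eSign (n P)

/-- Structure constants of the octonion-type multiplication on `O_F` determined by a norm `N`
and a multiplication factor `ε`: `e_0` is a two-sided unit, `e_P ⬝ e_P = −N(P) e_0` and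
`e_P ⬝ e_Q = ε_{PQ} e_{P+Q}` for distinct points `P`, `Q` of the Fano plane. -/
def structC (𝔽 : Type*) [Field 𝔽] (N : V → ℤ) (ε : V → V → ℤ) (P Q : V) : 𝔽 :=
  if P = 0 ∨ Q = 0 then 1
  else if P = Q then -(N P : 𝔽)
  else (ε P Q : 𝔽)

/-- The bilinear multiplication on `O_F = (V → 𝔽)` with the above structure constants
(in `V` we have `X = Y + Z ↔ Z = X + Y`). -/
def octMul (𝔽 : Type*) [Field 𝔽] (N : V → ℤ) (ε : V → V → ℤ) (Z W : V → 𝔽) : V → 𝔽 :=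
  fun X => ∑ Y : V, structC 𝔽 N ε Y (X + Y) * Z Y * W (X + Y)

/-- The quadratic form `N_O` on `O_F`. -/
def octNorm (𝔽 : Type*) [Field 𝔽] (N : V → ℤ) (Z : V → 𝔽) : 𝔽 :=
  ∑ X : V, (if X = 0 then 1 else (N X : 𝔽)) * Z X ^ 2

/-- `(O_F, N, ε)` is a composition algebra: `N_O(Z ⬝ W) = N_O(Z) N_O(W)`. -/
def IsCompAlg (𝔽 : Type*) [Field 𝔽] (N : V → ℤ) (ε : V → V → ℤ) : Prop :=
  ∀ Z W : V → 𝔽, octNorm 𝔽 N (octMul 𝔽 N ε Z W) = octNorm 𝔽 N Z * octNorm 𝔽 N W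

/-! ### Auxiliary material for statement 17 -/

lemma vadd_self (v : V) : v + v = 0 := by
  funext i
  have h : ∀ x : ZMod 2, x + x = 0 := by decide
  exact h (v i)

lemma vadd_cancel_right (x y : V) : x + y + y = x := by
  rw [add_assoc, vadd_self, add_zero]

lemma veq_of_add_eq_zero {a b : V} (h : a + b = 0) : a = b := by
  calc a = a + (b + b) := by rw [vadd_self, add_zero]
  _ = (a + b) + b := by rw [add_assoc]
  _ = b := by rw [h, zero_add]

lemma vswap (a b : V) : a + b + a = b := by
  rw [add_comm a b, add_assoc, vadd_self, add_zero]

lemma vsolve {x y a : V} (h : x + y = a) : x = y + a := by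
  rw [← h, add_comm y (x + y)]
  exact (vadd_cancel_right x y).symm

lemma eSign_or (x : ZMod 2) : eSign x = 1 ∨ eSign x = -1 := by
  revert x; decide

lemma eSign_ne_zero (x : ZMod 2) : eSign x ≠ 0 := by
  revert x; decide

lemma eSign_add (x y : ZMod 2) : eSign (x + y) = eSign x * eSign y := by
  revert x y; decide

/-- Integer weight of the quadratic form. -/
def qInt (N : V → ℤ) (X : V) : ℤ := if X = 0 then 1 else N X

/-- Integer structure constants. -/
def cInt (N : V → ℤ) (ε : V → V → ℤ) (P Q : V) : ℤ :=
  if P = 0 ∨ Q = 0 then 1 else if P = Q then -N P else ε P Q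

lemma structC_cast (𝔽 : Type*) [Field 𝔽] (N : V → ℤ) (ε : V → V → ℤ) (P Q : V) :
    structC 𝔽 N ε P Q = ((cInt N ε P Q : ℤ) : 𝔽) := by
  unfold structC cInt
  split_ifs <;> push_cast <;> ring

lemma weight_cast (𝔽 : Type*) [Field 𝔽] (N : V → ℤ) (X : V) :
    (if X = 0 then (1 : 𝔽) else (N X : 𝔽)) = ((qInt N X : ℤ) : 𝔽) := by
  unfold qInt
  split_ifs <;> simp

lemma octNorm_cast (𝔽 : Type*) [Field 𝔽] (N : V → ℤ) (Z : V → 𝔽) :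
    octNorm 𝔽 N Z = ∑ X : V, ((qInt N X : ℤ) : 𝔽) * Z X ^ 2 := by
  unfold octNorm
  exact Finset.sum_congr rfl fun X _ => by rw [weight_cast]

/-- The combinatorial composition condition. -/
def Cond2 (N : V → ℤ) (ε : V → V → ℤ) : Prop :=
  ∀ Y Y' A B : V, Y ≠ Y' → A + B = Y + Y' →
    qInt N (Y + A) * cInt N ε Y A * cInt N ε Y' B
      + qInt N (Y + B) * cInt N ε Y B * cInt N ε Y' A = 0

lemma qInt_one (X : V) : qInt (fun _ => 1) X = 1 := by
  unfold qInt; split_ifs <;> rfl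

lemma qInt_NormOf (n' : V →ₗ[ZMod 2] ZMod 2) (X : V) :
    qInt (NormOf n') X = eSign (n' X) := by
  unfold qInt NormOf
  split_ifs with h
  · rw [h, map_zero]; rfl
  · rfl
lemma compAlg_iff_cond (𝔽 : Type*) [Field 𝔽] (hchar : (2 : 𝔽) ≠ 0)
    (N : V → ℤ) (ε : V → V → ℤ)
    (hsq : ∀ P Q : V, cInt N ε P Q = 1 ∨ cInt N ε P Q = -1)
    (hq1 : ∀ X : V, qInt N X = 1 ∨ qInt N X = -1)
    (hqm : ∀ X Y : V, qInt N (X + Y) = qInt N X * qInt N Y) :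
    IsCompAlg 𝔽 N ε ↔ Cond2 N ε := by
  have sq1 : ∀ P Q : V, cInt N ε P Q ^ 2 = 1 := by
    intro P Q; rcases hsq P Q with h | h <;> rw [h] <;> norm_num
  constructor
  · -- IsCompAlg → Cond2
    intro hca Y Y' A B hne hsum
    have hAB : A ≠ B := by
      intro h
      apply hne
      apply veq_of_add_eq_zero
      rw [← hsum, h, vadd_self]
    set Z : V → 𝔽 := fun X => if X = Y ∨ X = Y' then 1 else 0 with hZdef
    set W : V → 𝔽 := fun X => if X = A ∨ X = B then 1 else 0 with hWdef
    have hswap1 : Y' + A = Y + B := by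
      apply veq_of_add_eq_zero
      have h1 : Y' + A + (Y + B) = (Y + Y') + (A + B) := by abel
      rw [h1, ← hsum, vadd_self]
    have hswap2 : Y' + B = Y + A := by
      apply veq_of_add_eq_zero
      have h1 : Y' + B + (Y + A) = (Y + Y') + (A + B) := by abel
      rw [h1, ← hsum, vadd_self]
    have hX12 : Y + A ≠ Y + B := fun h => hAB (add_left_cancel h)
    have normZ : octNorm 𝔽 N Z = ((qInt N Y : ℤ) : 𝔽) + ((qInt N Y' : ℤ) : 𝔽) := by
      rw [octNorm_cast]
      rw [← Finset.sum_subset (Finset.subset_univ ({Y, Y'} : Finset V))]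
      · rw [Finset.sum_pair hne]
        simp [hZdef]
      · intro x _ hx
        simp only [Finset.mem_insert, Finset.mem_singleton, not_or] at hx
        simp [hZdef, hx.1, hx.2]
    have normW : octNorm 𝔽 N W = ((qInt N A : ℤ) : 𝔽) + ((qInt N B : ℤ) : 𝔽) := by
      rw [octNorm_cast]
      rw [← Finset.sum_subset (Finset.subset_univ ({A, B} : Finset V))]
      · rw [Finset.sum_pair hAB]
        simp [hWdef]
      · intro x _ hx
        simp only [Finset.mem_insert, Finset.mem_singleton, not_or] at hx
        simp [hWdef, hx.1, hx.2]
    have mulZW : ∀ X : V, octMul 𝔽 N ε Z W X =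
        ((cInt N ε Y (X + Y) : ℤ) : 𝔽) * W (X + Y)
          + ((cInt N ε Y' (X + Y') : ℤ) : 𝔽) * W (X + Y') := by
      intro X
      unfold octMul
      rw [← Finset.sum_subset (Finset.subset_univ ({Y, Y'} : Finset V))]
      · rw [Finset.sum_pair hne]
        simp [hZdef, structC_cast]
      · intro x _ hx
        simp only [Finset.mem_insert, Finset.mem_singleton, not_or] at hx
        simp [hZdef, hx.1, hx.2]
    have e1 : Y + A + Y = A := vswap Y A
    have e2 : Y + A + Y' = B := by
      apply veq_of_add_eq_zero
      have h1 : Y + A + Y' + B = (Y + Y') + (A + B) := by abel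
      rw [h1, ← hsum, vadd_self]
    have e3 : Y + B + Y = B := vswap Y B
    have e4 : Y + B + Y' = A := by
      apply veq_of_add_eq_zero
      have h1 : Y + B + Y' + A = (Y + Y') + (A + B) := by abel
      rw [h1, ← hsum, vadd_self]
    have wA : W A = 1 := by simp [hWdef]
    have wB : W B = 1 := by simp [hWdef]
    have normM : octNorm 𝔽 N (octMul 𝔽 N ε Z W) =
        ((qInt N (Y + A) : ℤ) : 𝔽) * (octMul 𝔽 N ε Z W (Y + A)) ^ 2
          + ((qInt N (Y + B) : ℤ) : 𝔽) * (octMul 𝔽 N ε Z W (Y + B)) ^ 2 := by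
      rw [octNorm_cast]
      rw [← Finset.sum_subset (Finset.subset_univ ({Y + A, Y + B} : Finset V))]
      · rw [Finset.sum_pair hX12]
      · intro x _ hx
        simp only [Finset.mem_insert, Finset.mem_singleton, not_or] at hx
        have w1 : W (x + Y) = 0 := by
          rw [hWdef]
          simp only
          rw [if_neg]
          push_neg
          constructor
          · intro hxa; exact hx.1 (by rw [vsolve hxa])
          · intro hxb; exact hx.2 (by rw [vsolve hxb])
        have w2 : W (x + Y') = 0 := by
          rw [hWdef]
          simp only
          rw [if_neg]
          push_neg
          constructor
          · intro hxa; exact hx.2 (by rw [vsolve hxa, hswap1])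
          · intro hxb; exact hx.1 (by rw [vsolve hxb, hswap2])
        rw [mulZW, w1, w2, mul_zero, mul_zero, add_zero]
        ring
    have h := hca Z W
    rw [normM, normZ, normW, mulZW, mulZW, e1, e2, e3, e4, wA, wB] at h
    -- cast facts
    have fa : ((cInt N ε Y A : ℤ) : 𝔽) ^ 2 = 1 := by exact_mod_cast congrArg (fun z : ℤ => (z : 𝔽)) (sq1 Y A)
    have fb : ((cInt N ε Y' B : ℤ) : 𝔽) ^ 2 = 1 := by exact_mod_cast congrArg (fun z : ℤ => (z : 𝔽)) (sq1 Y' B)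
    have fc : ((cInt N ε Y B : ℤ) : 𝔽) ^ 2 = 1 := by exact_mod_cast congrArg (fun z : ℤ => (z : 𝔽)) (sq1 Y B)
    have fd : ((cInt N ε Y' A : ℤ) : 𝔽) ^ 2 = 1 := by exact_mod_cast congrArg (fun z : ℤ => (z : 𝔽)) (sq1 Y' A)
    have fq1 : ((qInt N (Y + A) : ℤ) : 𝔽) = ((qInt N Y : ℤ) : 𝔽) * ((qInt N A : ℤ) : 𝔽) := by
      exact_mod_cast congrArg (fun z : ℤ => (z : 𝔽)) (hqm Y A)
    have fq2 : ((qInt N (Y + A) : ℤ) : 𝔽) = ((qInt N Y' : ℤ) : 𝔽) * ((qInt N B : ℤ) : 𝔽) := by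
      rw [← hswap2]; exact_mod_cast congrArg (fun z : ℤ => (z : 𝔽)) (hqm Y' B)
    have fq3 : ((qInt N (Y + B) : ℤ) : 𝔽) = ((qInt N Y : ℤ) : 𝔽) * ((qInt N B : ℤ) : 𝔽) := by
      exact_mod_cast congrArg (fun z : ℤ => (z : 𝔽)) (hqm Y B)
    have fq4 : ((qInt N (Y + B) : ℤ) : 𝔽) = ((qInt N Y' : ℤ) : 𝔽) * ((qInt N A : ℤ) : 𝔽) := by
      rw [← hswap1]; exact_mod_cast congrArg (fun z : ℤ => (z : 𝔽)) (hqm Y' A)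
    have key : ((qInt N (Y + A) * cInt N ε Y A * cInt N ε Y' B
        + qInt N (Y + B) * cInt N ε Y B * cInt N ε Y' A : ℤ) : 𝔽) * 2 = 0 := by
      push_cast
      linear_combination h - ((qInt N (Y + A) : ℤ) : 𝔽) * fa - ((qInt N (Y + A) : ℤ) : 𝔽) * fb
        - ((qInt N (Y + B) : ℤ) : 𝔽) * fc - ((qInt N (Y + B) : ℤ) : 𝔽) * fd
        - fq1 - fq2 - fq3 - fq4
    have hz : ((qInt N (Y + A) * cInt N ε Y A * cInt N ε Y' B
        + qInt N (Y + B) * cInt N ε Y B * cInt N ε Y' A : ℤ) : 𝔽) = 0 := by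
      rcases mul_eq_zero.mp key with h' | h'
      · exact h'
      · exact absurd h' hchar
    have t1 : qInt N (Y + A) * cInt N ε Y A * cInt N ε Y' B = 1
        ∨ qInt N (Y + A) * cInt N ε Y A * cInt N ε Y' B = -1 := by
      rcases hq1 (Y + A) with h1 | h1 <;> rcases hsq Y A with h2 | h2 <;>
        rcases hsq Y' B with h3 | h3 <;> rw [h1, h2, h3] <;> norm_num
    have t2 : qInt N (Y + B) * cInt N ε Y B * cInt N ε Y' A = 1
        ∨ qInt N (Y + B) * cInt N ε Y B * cInt N ε Y' A = -1 := by
      rcases hq1 (Y + B) with h1 | h1 <;> rcases hsq Y B with h2 | h2 <;>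
        rcases hsq Y' A with h3 | h3 <;> rw [h1, h2, h3] <;> norm_num
    rcases t1 with h1 | h1 <;> rcases t2 with h2 | h2 <;> rw [h1, h2] at hz ⊢ <;> try norm_num
    · exact absurd (by exact_mod_cast hz : (2 : 𝔽) = 0) hchar
    · exact absurd (neg_eq_zero.mp (by exact_mod_cast hz : (-2 : 𝔽) = 0)) hchar
  · -- Cond2 → IsCompAlg
    intro hcond Z W
    set F : V → V → V → 𝔽 := fun X Y₁ Y₂ =>
      ((qInt N X : ℤ) : 𝔽) * (((cInt N ε Y₁ (X + Y₁) : ℤ) : 𝔽) * Z Y₁ * W (X + Y₁)) *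
        (((cInt N ε Y₂ (X + Y₂) : ℤ) : 𝔽) * Z Y₂ * W (X + Y₂)) with hF
    have octMul_eq : ∀ X : V, octMul 𝔽 N ε Z W X
        = ∑ Y₁ : V, ((cInt N ε Y₁ (X + Y₁) : ℤ) : 𝔽) * Z Y₁ * W (X + Y₁) :=
      fun X => Finset.sum_congr rfl fun Y₁ _ => by rw [structC_cast]
    have step1 : ∀ X : V, ((qInt N X : ℤ) : 𝔽) * (octMul 𝔽 N ε Z W X) ^ 2
        = ∑ Y₁ : V, ∑ Y₂ : V, F X Y₁ Y₂ := by
      intro X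
      rw [octMul_eq, sq, Finset.sum_mul_sum, Finset.mul_sum]
      refine Finset.sum_congr rfl fun Y₁ _ => ?_
      rw [Finset.mul_sum]
      refine Finset.sum_congr rfl fun Y₂ _ => ?_
      rw [hF]; ring
    have hdiag : (∑ X : V, ∑ Y₁ : V, F X Y₁ Y₁)
        = (∑ X : V, ((qInt N X : ℤ) : 𝔽) * Z X ^ 2) * (∑ X : V, ((qInt N X : ℤ) : 𝔽) * W X ^ 2) := by
      rw [Finset.sum_comm, Finset.sum_mul_sum]
      refine Finset.sum_congr rfl fun Y₁ _ => ?_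
      refine (Fintype.sum_bijective (fun U : V => U + Y₁) (Equiv.addRight Y₁).bijective _ _
        fun U => ?_).symm
      show ((qInt N Y₁ : ℤ) : 𝔽) * Z Y₁ ^ 2 * (((qInt N U : ℤ) : 𝔽) * W U ^ 2) = F (U + Y₁) Y₁ Y₁
      rw [hF]
      simp only
      rw [vadd_cancel_right]
      have f1 : ((qInt N (U + Y₁) : ℤ) : 𝔽) = ((qInt N U : ℤ) : 𝔽) * ((qInt N Y₁ : ℤ) : 𝔽) := by
        exact_mod_cast congrArg (fun z : ℤ => (z : 𝔽)) (hqm U Y₁)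
      have f2 : ((cInt N ε Y₁ U : ℤ) : 𝔽) ^ 2 = 1 := by exact_mod_cast congrArg (fun z : ℤ => (z : 𝔽)) (sq1 Y₁ U)
      linear_combination (-(Z Y₁ ^ 2 * W U ^ 2 * ((qInt N (U + Y₁) : ℤ) : 𝔽))) * f2
        - (Z Y₁ ^ 2 * W U ^ 2) * f1
    have hoff : (∑ X : V, ∑ Y₁ : V, ∑ Y₂ ∈ Finset.univ.erase Y₁, F X Y₁ Y₂) = 0 := by
      rw [Finset.sum_comm]
      refine Finset.sum_eq_zero fun Y₁ _ => ?_
      rw [Finset.sum_comm]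
      refine Finset.sum_eq_zero fun Y₂ hY₂ => ?_
      have hne : Y₂ ≠ Y₁ := Finset.ne_of_mem_erase hY₂
      have hrw : ∀ X : V, F X Y₁ Y₂ + F (X + (Y₁ + Y₂)) Y₁ Y₂ = 0 := by
        intro X
        have hv1 : X + (Y₁ + Y₂) + Y₁ = X + Y₂ := by
          have h1 : X + (Y₁ + Y₂) + Y₁ = X + Y₂ + (Y₁ + Y₁) := by abel
          rw [h1, vadd_self, add_zero]
        have hv2 : X + (Y₁ + Y₂) + Y₂ = X + Y₁ := by
          have h1 : X + (Y₁ + Y₂) + Y₂ = X + Y₁ + (Y₂ + Y₂) := by abel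
          rw [h1, vadd_self, add_zero]
        have hs : (X + Y₁) + (X + Y₂) = Y₁ + Y₂ := by
          have h1 : (X + Y₁) + (X + Y₂) = (Y₁ + Y₂) + (X + X) := by abel
          rw [h1, vadd_self, add_zero]
        have hc := hcond Y₁ Y₂ (X + Y₁) (X + Y₂) hne.symm hs
        have ha : Y₁ + (X + Y₁) = X := by
          have h1 : Y₁ + (X + Y₁) = X + (Y₁ + Y₁) := by abel
          rw [h1, vadd_self, add_zero]
        have hb : Y₁ + (X + Y₂) = X + (Y₁ + Y₂) := by abel
        rw [ha, hb] at hc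
        have hcF : ((qInt N X : ℤ) : 𝔽) * ((cInt N ε Y₁ (X + Y₁) : ℤ) : 𝔽)
              * ((cInt N ε Y₂ (X + Y₂) : ℤ) : 𝔽)
            + ((qInt N (X + (Y₁ + Y₂)) : ℤ) : 𝔽) * ((cInt N ε Y₁ (X + Y₂) : ℤ) : 𝔽)
              * ((cInt N ε Y₂ (X + Y₁) : ℤ) : 𝔽) = 0 := by
          exact_mod_cast congrArg (fun z : ℤ => (z : 𝔽)) hc
        rw [hF]
        simp only
        rw [hv1, hv2]
        linear_combination (Z Y₁ * Z Y₂ * W (X + Y₁) * W (X + Y₂)) * hcF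
      have h2 : (∑ X : V, F X Y₁ Y₂) + (∑ X : V, F X Y₁ Y₂) = 0 := by
        nth_rewrite 2 [(Fintype.sum_bijective (fun X : V => X + (Y₁ + Y₂))
          (Equiv.addRight (Y₁ + Y₂)).bijective (fun X => F (X + (Y₁ + Y₂)) Y₁ Y₂)
          (fun X => F X Y₁ Y₂) (fun X => rfl)).symm]
        rw [← Finset.sum_add_distrib]
        exact Finset.sum_eq_zero fun X _ => hrw X
      have h3 : (2 : 𝔽) * (∑ X : V, F X Y₁ Y₂) = 0 := by rw [two_mul]; exact h2
      exact (mul_eq_zero.mp h3).resolve_left hchar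
    rw [octNorm_cast, octNorm_cast, octNorm_cast]
    calc (∑ X : V, ((qInt N X : ℤ) : 𝔽) * (octMul 𝔽 N ε Z W X) ^ 2)
        = ∑ X : V, ∑ Y₁ : V, ∑ Y₂ : V, F X Y₁ Y₂ :=
          Finset.sum_congr rfl fun X _ => step1 X
      _ = ∑ X : V, ∑ Y₁ : V, (F X Y₁ Y₁ + ∑ Y₂ ∈ Finset.univ.erase Y₁, F X Y₁ Y₂) := by
          refine Finset.sum_congr rfl fun X _ => Finset.sum_congr rfl fun Y₁ _ => ?_
          rw [← Finset.add_sum_erase _ _ (Finset.mem_univ Y₁)]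
      _ = (∑ X : V, ∑ Y₁ : V, F X Y₁ Y₁)
            + ∑ X : V, ∑ Y₁ : V, ∑ Y₂ ∈ Finset.univ.erase Y₁, F X Y₁ Y₂ := by
          rw [← Finset.sum_add_distrib]
          exact Finset.sum_congr rfl fun X _ => Finset.sum_add_distrib
      _ = (∑ X : V, ((qInt N X : ℤ) : 𝔽) * Z X ^ 2) * (∑ X : V, ((qInt N X : ℤ) : 𝔽) * W X ^ 2) := by
          rw [hdiag, hoff, add_zero]
lemma cInt_rel (n' : V →ₗ[ZMod 2] ZMod 2) (ε ε' : V → V → ℤ)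
    (hrel : ∀ P Q : V, P ≠ 0 → Q ≠ 0 → P ≠ Q →
      ε' P Q = eSign (n' P * n' Q) * ε P Q) :
    ∀ P Q : V, cInt (NormOf n') ε' P Q
      = eSign (n' P * n' Q) * cInt (fun _ => 1) ε P Q := by
  intro P Q
  unfold cInt
  by_cases h0 : P = 0 ∨ Q = 0
  · rw [if_pos h0, if_pos h0]
    rcases h0 with h | h <;> rw [h] <;> simp [eSign, map_zero]
  · rw [if_neg h0, if_neg h0]
    push_neg at h0
    by_cases hPQ : P = Q
    · subst hPQ
      rw [if_pos rfl, if_pos rfl]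
      have hx : n' P * n' P = n' P := by
        have : ∀ x : ZMod 2, x * x = x := by decide
        exact this _
      rw [hx]
      unfold NormOf
      ring
    · rw [if_neg hPQ, if_neg hPQ]
      exact hrel P Q h0.1 h0.2 hPQ

lemma cond_iff (n' : V →ₗ[ZMod 2] ZMod 2) (ε ε' : V → V → ℤ)
    (hrel : ∀ P Q : V, P ≠ 0 → Q ≠ 0 → P ≠ Q →
      ε' P Q = eSign (n' P * n' Q) * ε P Q) :
    Cond2 (fun _ => 1) ε ↔ Cond2 (NormOf n') ε' := by
  have hc := cInt_rel n' ε ε' hrel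
  have e3 : ∀ x y z : ZMod 2, eSign (x + y + z) = eSign x * eSign y * eSign z := by decide
  have swap : ∀ y y' a b : ZMod 2, a + b = y + y' →
      y + a + y * a + y' * b = y + b + y * b + y' * a := by decide
  have key : ∀ Y Y' A B : V, A + B = Y + Y' →
      qInt (NormOf n') (Y + A) * cInt (NormOf n') ε' Y A * cInt (NormOf n') ε' Y' B
        + qInt (NormOf n') (Y + B) * cInt (NormOf n') ε' Y B * cInt (NormOf n') ε' Y' A
      = eSign (n' Y + n' A + n' Y * n' A + n' Y' * n' B) *
        (qInt (fun _ => 1) (Y + A) * cInt (fun _ => 1) ε Y A * cInt (fun _ => 1) ε Y' B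
          + qInt (fun _ => 1) (Y + B) * cInt (fun _ => 1) ε Y B * cInt (fun _ => 1) ε Y' A) := by
    intro Y Y' A B hsum
    have hn : n' A + n' B = n' Y + n' Y' := by rw [← map_add, ← map_add, hsum]
    rw [hc Y A, hc Y' B, hc Y B, hc Y' A, qInt_NormOf, qInt_NormOf, qInt_one, qInt_one,
      map_add, map_add]
    have E1 : eSign (n' Y + n' A + n' Y * n' A + n' Y' * n' B)
        = eSign (n' Y + n' A) * eSign (n' Y * n' A) * eSign (n' Y' * n' B) :=
      e3 _ _ _
    have E2 : eSign (n' Y + n' A + n' Y * n' A + n' Y' * n' B)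
        = eSign (n' Y + n' B) * eSign (n' Y * n' B) * eSign (n' Y' * n' A) := by
      rw [swap (n' Y) (n' Y') (n' A) (n' B) hn]
      exact e3 _ _ _
    linear_combination
      ((cInt (fun _ => 1) ε Y A : ℤ) * cInt (fun _ => 1) ε Y' B) * E1.symm
        + ((cInt (fun _ => 1) ε Y B : ℤ) * cInt (fun _ => 1) ε Y' A) * E2.symm
  constructor
  · intro h Y Y' A B hne hsum
    rw [key Y Y' A B hsum, h Y Y' A B hne hsum, mul_zero]
  · intro h Y Y' A B hne hsum
    have h2 := h Y Y' A B hne hsum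
    rw [key Y Y' A B hsum] at h2
    rcases mul_eq_zero.mp h2 with h3 | h3
    · exact absurd h3 (eSign_ne_zero _)
    · exact h3
/-- for multiplication factors related by
`ε′_{PQ} = e^{n′(P)n′(Q)} ε_{PQ}`, `(O_F, 1, ε)` is a composition algebra iff
`(O_F, e^{n′}, ε′)` is. -/
theorem stmt_17 (𝔽 : Type*) [Field 𝔽] (hchar : (2 : 𝔽) ≠ 0)
    (n' : V →ₗ[ZMod 2] ZMod 2) (ε ε' : V → V → ℤ)
    (hε : IsMulFactor ε) (hε' : IsMulFactor ε')
    (hrel : ∀ P Q : V, P ≠ 0 → Q ≠ 0 → P ≠ Q →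
      ε' P Q = eSign (n' P * n' Q) * ε P Q) :
    IsCompAlg 𝔽 (fun _ => 1) ε ↔ IsCompAlg 𝔽 (NormOf n') ε' := by
  have hsq1 : ∀ P Q : V, cInt (fun _ => 1) ε P Q = 1 ∨ cInt (fun _ => 1) ε P Q = -1 := by
    intro P Q
    unfold cInt
    split_ifs with h1 h2
    · exact Or.inl rfl
    · exact Or.inr (by norm_num)
    · push_neg at h1
      exact (hε.1 P Q h1.1 h1.2 h2).1
  have hsq2 : ∀ P Q : V, cInt (NormOf n') ε' P Q = 1 ∨ cInt (NormOf n') ε' P Q = -1 := by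
    intro P Q
    unfold cInt
    split_ifs with h1 h2
    · exact Or.inl rfl
    · unfold NormOf
      rcases eSign_or (n' P) with h | h <;> rw [h]
      · exact Or.inr (by norm_num)
      · exact Or.inl (by norm_num)
    · push_neg at h1
      exact (hε'.1 P Q h1.1 h1.2 h2).1
  have hq1a : ∀ X : V, qInt (fun _ => 1) X = 1 ∨ qInt (fun _ => 1) X = -1 :=
    fun X => Or.inl (qInt_one X)
  have hq1b : ∀ X : V, qInt (NormOf n') X = 1 ∨ qInt (NormOf n') X = -1 := by
    intro X
    rw [qInt_NormOf]
    exact eSign_or _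
  have hqm1 : ∀ X Y : V, qInt (fun _ => 1) (X + Y) = qInt (fun _ => 1) X * qInt (fun _ => 1) Y := by
    intro X Y
    rw [qInt_one, qInt_one, qInt_one, one_mul]
  have hqm2 : ∀ X Y : V, qInt (NormOf n') (X + Y) = qInt (NormOf n') X * qInt (NormOf n') Y := by
    intro X Y
    rw [qInt_NormOf, qInt_NormOf, qInt_NormOf, map_add, eSign_add]
  rw [compAlg_iff_cond 𝔽 hchar (fun _ => 1) ε hsq1 hq1a hqm1,
    compAlg_iff_cond 𝔽 hchar (NormOf n') ε' hsq2 hq1b hqm2]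
  exact cond_iff n' ε ε' hrel
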